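/- arXiv:1802.00959 — 3 statements merged into one kernel-verified Lean document; each statement's English description precedes it below -/
import Mathlib

section
/- For complex q, z with |q| < 1, z ≠ 0, and suitable convergence, Σ_{n≥0} q^{2n²+2n} / ((q/z; q²)_{n+1} (zq; q²)_{n+1}) = Σ_{n≥0} z^{−n} qⁿ / (zq; q²)_{n+1}. -/
/-!
Put `F(a, b) = ∑ₙ aⁿ / (b; Q)_{n+1}`. Splitting off the term `n = 0` and subtracting `a F(a, b)`
termwise gives the functional equation `(1 - a) F(a, b) = (1 - b)⁻¹ (1 + a b Q F(a Q, b Q))`.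
Iterated `M` times it reads `F(a, b) = ∑_{m < M} T_m + W_M F(a Q^M, b Q^M)`, where
`W_m = (a b)^m Q^{m²} / ((a; Q)_m (b; Q)_m)` and `T_m` is `W_m` with `(·; Q)_{m+1}` in the denominator.
Since the finite products converge to nonzero infinite products, they are bounded away from zero,
so the remainder is `O(‖a b Q‖^M)` and `F(a, b) = ∑ T_m`. For `a = q / z`, `b = z q`, `Q = q²`
one has `a b = Q`, and this is the identity.
-/

open scoped BigOperators

/-- Finite q-Pochhammer symbol `(a; q)_n`. -/
noncomputable def qPoch (a q : ℂ) (n : ℕ) : ℂ :=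
  ∏ k ∈ Finset.range n, (1 - a * q ^ k)

/-- Infinite q-Pochhammer symbol `(a; q)_∞`. -/
noncomputable def qPochInf (a q : ℂ) : ℂ :=
  ∏' k : ℕ, (1 - a * q ^ k)

open Finset Filter Topology

lemma exists_pos_le_norm_of_tendsto {E : Type*} [NormedAddCommGroup E] {u : ℕ → E} {L : E}
    (hu : Tendsto u atTop (𝓝 L)) (hL : L ≠ 0) (hu0 : ∀ n, u n ≠ 0) :
    ∃ c > 0, ∀ n, c ≤ ‖u n‖ := by
  obtain ⟨c, hcK, hc⟩ := hu.norm.isCompact_insert_range.exists_isMinOn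
    (Set.insert_nonempty _ _) continuousOn_id
  refine ⟨c, ?_, fun n => hc (Set.mem_insert_of_mem _ ⟨n, rfl⟩)⟩
  rcases hcK with rfl | ⟨n, rfl⟩
  · exact norm_pos_iff.mpr hL
  · exact norm_pos_iff.mpr (hu0 n)

section qPoch

variable (b Q : ℂ)

@[simp] lemma qPoch_zero : qPoch b Q 0 = 1 := prod_range_zero _

lemma qPoch_succ (n : ℕ) : qPoch b Q (n + 1) = qPoch b Q n * (1 - b * Q ^ n) :=
  prod_range_succ _ _

lemma qPoch_add (m n : ℕ) : qPoch b Q (m + n) = qPoch b Q m * qPoch (b * Q ^ m) Q n := by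
  simp only [qPoch, prod_range_add, pow_add, mul_assoc]

lemma qPoch_succ' (n : ℕ) : qPoch b Q (n + 1) = (1 - b) * qPoch (b * Q) Q n := by
  rw [add_comm, qPoch_add]
  simp [qPoch]

variable {b Q}

lemma qPoch_ne_zero (hb : ∀ k, 1 - b * Q ^ k ≠ 0) (n : ℕ) : qPoch b Q n ≠ 0 :=
  prod_ne_zero_iff.mpr fun k _ => hb k

lemma one_sub_mul_pow_mul_pow_ne_zero (hb : ∀ k, 1 - b * Q ^ k ≠ 0) (m k : ℕ) :
    1 - b * Q ^ m * Q ^ k ≠ 0 := by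
  rw [mul_assoc, ← pow_add]
  exact hb (m + k)

lemma summable_norm_mul_pow (hQ : ‖Q‖ < 1) : Summable fun k => ‖b * Q ^ k‖ := by
  simpa only [norm_mul, norm_pow] using
    (summable_geometric_of_lt_one (norm_nonneg _) hQ).mul_left ‖b‖

lemma tendsto_qPoch_qPochInf (hQ : ‖Q‖ < 1) :
    Tendsto (qPoch b Q) atTop (𝓝 (qPochInf b Q)) := by
  have hsum : Summable fun k => ‖-(b * Q ^ k)‖ := by simpa using summable_norm_mul_pow hQ
  have hmul : Multipliable fun k => 1 - b * Q ^ k := by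
    simpa [sub_eq_add_neg] using multipliable_one_add_of_summable hsum
  exact hmul.tendsto_prod_tprod_nat

lemma qPochInf_ne_zero (hQ : ‖Q‖ < 1) (hb : ∀ k, 1 - b * Q ^ k ≠ 0) : qPochInf b Q ≠ 0 := by
  have hsum : Summable fun k => ‖-(b * Q ^ k)‖ := by simpa using summable_norm_mul_pow hQ
  simpa [qPochInf, sub_eq_add_neg] using
    tprod_one_add_ne_zero_of_summable (fun k => by simpa [sub_eq_add_neg] using hb k) hsum

lemma exists_pos_le_norm_qPoch (hQ : ‖Q‖ < 1) (hb : ∀ k, 1 - b * Q ^ k ≠ 0) :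
    ∃ c > 0, ∀ n, c ≤ ‖qPoch b Q n‖ :=
  exists_pos_le_norm_of_tendsto (tendsto_qPoch_qPochInf hQ) (qPochInf_ne_zero hQ hb)
    (qPoch_ne_zero hb)

/-- Uniform in the shift `m`, because `(b Q^m; Q)_n = (b; Q)_{m+n} / (b; Q)_m` and `(b; Q)_m` is
bounded. -/
lemma exists_pos_le_norm_qPoch_shift (hQ : ‖Q‖ < 1) (hb : ∀ k, 1 - b * Q ^ k ≠ 0) :
    ∃ c > 0, ∀ m n, c ≤ ‖qPoch (b * Q ^ m) Q n‖ := by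
  obtain ⟨c, hc, hcle⟩ := exists_pos_le_norm_qPoch hQ hb
  obtain ⟨D, hD⟩ := (tendsto_qPoch_qPochInf (b := b) hQ).norm.bddAbove_range
  have hD0 : 0 < D := by simpa using lt_of_lt_of_le hc ((hcle 0).trans (hD ⟨0, rfl⟩))
  refine ⟨c / D, div_pos hc hD0, fun m n => ?_⟩
  rw [div_le_iff₀ hD0]
  calc c ≤ ‖qPoch b Q m‖ * ‖qPoch (b * Q ^ m) Q n‖ := by
        rw [← norm_mul, ← qPoch_add]; exact hcle _
    _ ≤ D * ‖qPoch (b * Q ^ m) Q n‖ := by gcongr; exact hD ⟨m, rfl⟩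
    _ = _ := mul_comm _ _

end qPoch

noncomputable def qPochSeries (a b Q : ℂ) : ℂ := ∑' n : ℕ, a ^ n / qPoch b Q (n + 1)

section qPochSeries

variable {a b Q : ℂ}

lemma norm_pow_div_qPoch_le {r c : ℝ} (ha : ‖a‖ ≤ r) (hc : 0 < c)
    (hb : ∀ n, c ≤ ‖qPoch b Q n‖) (n : ℕ) :
    ‖a ^ n / qPoch b Q (n + 1)‖ ≤ c⁻¹ * r ^ n := by
  rw [norm_div, norm_pow, div_eq_inv_mul]
  gcongr
  exact hb _

lemma norm_qPochSeries_le {r c : ℝ} (ha : ‖a‖ ≤ r) (hr : r < 1) (hc : 0 < c)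
    (hb : ∀ n, c ≤ ‖qPoch b Q n‖) : ‖qPochSeries a b Q‖ ≤ c⁻¹ * (1 - r)⁻¹ :=
  tsum_of_norm_bounded ((hasSum_geometric_of_lt_one ((norm_nonneg a).trans ha) hr).mul_left _)
    (norm_pow_div_qPoch_le ha hc hb)

lemma summable_qPochSeries (hQ : ‖Q‖ < 1) (ha : ‖a‖ < 1) (hb : ∀ k, 1 - b * Q ^ k ≠ 0) :
    Summable fun n => a ^ n / qPoch b Q (n + 1) := by
  obtain ⟨c, hc, hcle⟩ := exists_pos_le_norm_qPoch hQ hb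
  exact .of_norm_bounded ((summable_geometric_of_lt_one (norm_nonneg a) ha).mul_left _)
    (norm_pow_div_qPoch_le le_rfl hc hcle)

lemma pow_div_qPoch_sub_pow_div_qPoch (hb : ∀ k, 1 - b * Q ^ k ≠ 0) (n : ℕ) :
    a ^ (n + 1) / qPoch b Q (n + 2) - a ^ (n + 1) / qPoch b Q (n + 1)
      = a * b * Q * (1 - b)⁻¹ * ((a * Q) ^ n / qPoch (b * Q) Q (n + 1)) := by
  have hx := qPoch_ne_zero hb (n + 1)
  have hshift : (1 - b) * qPoch (b * Q) Q (n + 1) = qPoch b Q (n + 1) * (1 - b * Q ^ (n + 1)) := by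
    rw [← qPoch_succ', qPoch_succ]
  have hxy := qPoch_ne_zero hb (n + 2)
  rw [qPoch_succ' b Q (n + 1)] at hxy ⊢
  have hy := right_ne_zero_of_mul hxy
  have hb0 := left_ne_zero_of_mul hxy
  field_simp
  linear_combination (-a ^ (n + 1)) * hshift

lemma qPochSeries_functional_eq (hQ : ‖Q‖ < 1) (ha : ‖a‖ < 1) (hb : ∀ k, 1 - b * Q ^ k ≠ 0) :
    (1 - a) * qPochSeries a b Q
      = (1 - b)⁻¹ + a * b * Q * (1 - b)⁻¹ * qPochSeries (a * Q) (b * Q) Q := by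
  have hS := summable_qPochSeries hQ ha hb
  have hS_tail : Summable fun n => a ^ (n + 1) / qPoch b Q (n + 2) := by
    simpa using (summable_nat_add_iff 1).mpr hS
  have haS : a * qPochSeries a b Q = ∑' n, a ^ (n + 1) / qPoch b Q (n + 1) := by
    rw [qPochSeries, ← tsum_mul_left]
    simp only [pow_succ', mul_div_assoc]
  have hS_split : qPochSeries a b Q = (1 - b)⁻¹ + ∑' n, a ^ (n + 1) / qPoch b Q (n + 2) := by
    rw [qPochSeries, hS.tsum_eq_zero_add]
    congr 1
    simp [qPoch]
  have haS_summable : Summable fun n => a ^ (n + 1) / qPoch b Q (n + 1) := by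
    simpa only [pow_succ', mul_div_assoc] using hS.mul_left a
  rw [sub_mul, one_mul, haS, hS_split, add_sub_assoc, ← hS_tail.tsum_sub haS_summable]
  simp only [pow_div_qPoch_sub_pow_div_qPoch hb, qPochSeries, tsum_mul_left]

end qPochSeries

noncomputable def quadWeight (a b Q : ℂ) (m : ℕ) : ℂ :=
  (a * b) ^ m * Q ^ (m ^ 2) / (qPoch a Q m * qPoch b Q m)

noncomputable def quadTerm (a b Q : ℂ) (m : ℕ) : ℂ :=
  (a * b) ^ m * Q ^ (m ^ 2) / (qPoch a Q (m + 1) * qPoch b Q (m + 1))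

section quadTerm

variable {a b Q : ℂ}

lemma norm_mul_pow_le (hQ : ‖Q‖ ≤ 1) (m : ℕ) : ‖a * Q ^ m‖ ≤ ‖a‖ := by
  rw [norm_mul, norm_pow]
  exact mul_le_of_le_one_right (norm_nonneg a) (pow_le_one₀ (norm_nonneg Q) hQ)

lemma norm_quad_div_le {x y : ℂ} {ca cb : ℝ} (hQ : ‖Q‖ ≤ 1) (hca : 0 < ca) (hcb : 0 < cb)
    (hx : ca ≤ ‖x‖) (hy : cb ≤ ‖y‖) (m : ℕ) :
    ‖(a * b) ^ m * Q ^ (m ^ 2) / (x * y)‖ ≤ (ca * cb)⁻¹ * ‖a * b * Q‖ ^ m := by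
  have hQm : ‖Q‖ ^ (m ^ 2) ≤ ‖Q‖ ^ m :=
    pow_le_pow_of_le_one (norm_nonneg Q) hQ (Nat.le_self_pow two_ne_zero m)
  rw [norm_div, div_eq_inv_mul, norm_mul ((a * b) ^ m), norm_pow, norm_pow, norm_mul (a * b) Q,
    mul_pow, norm_mul x y]
  gcongr

lemma quadTerm_eq_sub (hQ : ‖Q‖ < 1) (ha : ‖a‖ < 1) (ha' : ∀ k, 1 - a * Q ^ k ≠ 0)
    (hb : ∀ k, 1 - b * Q ^ k ≠ 0) (m : ℕ) :
    quadTerm a b Q m = quadWeight a b Q m * qPochSeries (a * Q ^ m) (b * Q ^ m) Q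
      - quadWeight a b Q (m + 1) * qPochSeries (a * Q ^ (m + 1)) (b * Q ^ (m + 1)) Q := by
  have hfe := qPochSeries_functional_eq hQ ((norm_mul_pow_le hQ.le m).trans_lt ha)
    (one_sub_mul_pow_mul_pow_ne_zero hb m)
  simp only [mul_assoc, ← pow_succ] at hfe
  have hpa := qPoch_ne_zero ha' m
  have hpb := qPoch_ne_zero hb m
  have hfa := ha' m
  have hfb := hb m
  rw [quadTerm, quadWeight, quadWeight, qPoch_succ a, qPoch_succ b]
  generalize qPochSeries (a * Q ^ m) (b * Q ^ m) Q = S at hfe ⊢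
  generalize qPochSeries (a * Q ^ (m + 1)) (b * Q ^ (m + 1)) Q = S' at hfe ⊢
  have hfb' : 1 - Q ^ m * b ≠ 0 := by rwa [mul_comm]
  field_simp at hfe ⊢
  linear_combination (-(a * b) ^ m * Q ^ m ^ 2) * hfe

theorem hasSum_quadTerm (hQ : ‖Q‖ < 1) (ha : ‖a‖ < 1) (hab : ‖a * b * Q‖ < 1)
    (ha' : ∀ k, 1 - a * Q ^ k ≠ 0) (hb : ∀ k, 1 - b * Q ^ k ≠ 0) :
    HasSum (quadTerm a b Q) (qPochSeries a b Q) := by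
  obtain ⟨ca, hca, hcal⟩ := exists_pos_le_norm_qPoch hQ ha'
  obtain ⟨cb, hcb, hcbl⟩ := exists_pos_le_norm_qPoch hQ hb
  obtain ⟨c, hc, hcl⟩ := exists_pos_le_norm_qPoch_shift hQ hb
  set g : ℕ → ℂ := fun m => quadWeight a b Q m * qPochSeries (a * Q ^ m) (b * Q ^ m) Q
  have hT : Summable (quadTerm a b Q) :=
    .of_norm_bounded ((summable_geometric_of_lt_one (norm_nonneg _) hab).mul_left _)
      fun m => norm_quad_div_le hQ.le hca hcb (hcal _) (hcbl _) m
  have hg : Tendsto g atTop (𝓝 0) := by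
    have hlim := ((tendsto_pow_atTop_nhds_zero_of_lt_one (norm_nonneg _) hab).const_mul
      (ca * cb)⁻¹).mul_const (c⁻¹ * (1 - ‖a‖)⁻¹)
    rw [mul_zero, zero_mul] at hlim
    refine squeeze_zero_norm (fun m => ?_) hlim
    rw [norm_mul]
    exact mul_le_mul (norm_quad_div_le hQ.le hca hcb (hcal _) (hcbl _) m)
      (norm_qPochSeries_le (norm_mul_pow_le hQ.le m) ha hc (hcl m)) (norm_nonneg _)
      (by positivity)
  have hpartial : ∀ M, ∑ m ∈ range M, quadTerm a b Q m = qPochSeries a b Q - g M := by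
    intro M
    rw [sum_congr rfl fun m _ => quadTerm_eq_sub hQ ha ha' hb m, sum_range_sub']
    simp [g, quadWeight]
  rw [hT.hasSum_iff_tendsto_nat]
  simpa [hpartial] using tendsto_const_nhds.sub hg

end quadTerm

theorem omega_spec_2_11 (q z : ℂ) (hq : ‖q‖ < 1) (hz : z ≠ 0) (hqz : ‖q / z‖ < 1)
    (hdz : ∀ k : ℕ, 1 - z * q ^ (2 * k + 1) ≠ 0)
    (hdz' : ∀ k : ℕ, 1 - (q / z) * q ^ (2 * k) ≠ 0) :
    ∑' n : ℕ, q ^ (2 * n ^ 2 + 2 * n) /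
        (qPoch (q / z) (q ^ 2) (n + 1) * qPoch (z * q) (q ^ 2) (n + 1))
      = ∑' n : ℕ, z⁻¹ ^ n * q ^ n / qPoch (z * q) (q ^ 2) (n + 1) := by
  have hab : q / z * (z * q) = q ^ 2 := by field_simp
  have hQ : ‖q ^ 2‖ < 1 := by simpa using pow_lt_one₀ (norm_nonneg q) hq two_ne_zero
  have habQ : ‖q / z * (z * q) * q ^ 2‖ < 1 := by
    simpa [hab, ← pow_add] using pow_lt_one₀ (norm_nonneg q) hq (by norm_num : 2 + 2 ≠ 0)
  have hsum := (hasSum_quadTerm hQ hqz habQ (by simpa [← pow_mul] using hdz')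
    fun k => by convert hdz k using 2; ring).tsum_eq
  convert hsum using 1
  · refine tsum_congr fun n => ?_
    rw [quadTerm, hab]
    ring
  · refine tsum_congr fun n => ?_
    ring
end

section
/- For complex q, z with |q| < 1 and |zq| < 1, Σ_{n≥0} (zⁿ q^{n²+n} / (zq; q²)_{n+1})² = Σ_{n≥0} zⁿ qⁿ / (zq; q²)_{n+1}. -/
open scoped BigOperators

set_option linter.deprecated false
set_option linter.unusedVariables false
set_option linter.unusedSectionVars false
set_option linter.unusedTactic false

namespace Omega212Aux


lemma qPoch_zero (a Q : ℂ) : qPoch a Q 0 = 1 := by simp [qPoch]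

lemma qPoch_succ (a Q : ℂ) (n : ℕ) : qPoch a Q (n+1) = qPoch a Q n * (1 - a * Q ^ n) := by
  simp [qPoch, Finset.prod_range_succ]

lemma qPoch_succ' (a Q : ℂ) (n : ℕ) : qPoch a Q (n+1) = (1 - a) * qPoch (a*Q) Q n := by
  rw [qPoch, Finset.prod_range_succ', qPoch, mul_comm]
  congr 1
  · simp
  · apply Finset.prod_congr rfl
    intro k _
    ring

lemma qPoch_one (a Q : ℂ) : qPoch a Q 1 = 1 - a := by simp [qPoch]

lemma exp_le_one_sub {a ε : ℝ} (ha : a < 1) (h0 : 0 ≤ ε) (hε : ε ≤ a) :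
    Real.exp (-(ε/(1-a))) ≤ 1 - ε := by
  have hδ : (0:ℝ) < 1 - a := by linarith
  have h1 : ε/(1-a) + 1 ≤ Real.exp (ε/(1-a)) := Real.add_one_le_exp _
  have h2 : (0:ℝ) < ε/(1-a) + 1 := by positivity
  rw [Real.exp_neg]
  have h3 : (Real.exp (ε/(1-a)))⁻¹ ≤ (ε/(1-a) + 1)⁻¹ := by
    exact inv_anti₀ h2 h1
  refine h3.trans ?_
  rw [inv_le_iff_one_le_mul₀ h2]
  have hεδ : ε/(1-a) = ε * (1-a)⁻¹ := div_eq_mul_inv _ _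
  have hpos : (0:ℝ) < (1-a)⁻¹ := by positivity
  have key : (0:ℝ) ≤ ε * (a - ε) := mul_nonneg h0 (by linarith)
  have expand : (1 - ε) * (ε/(1-a) + 1) - 1 = (ε * (a - ε)) / (1-a) := by
    field_simp
    ring
  nlinarith [div_nonneg key hδ.le]



lemma qPoch_norm_ge_exp (q z : ℂ) (hq : ‖q‖ < 1) (hzq : ‖z*q‖ < 1) (N n : ℕ) :
    Real.exp (-(‖z*q‖ / ((1-‖z*q‖)*(1-‖q‖^2)))) ≤ ‖qPoch (z*q^(2*N+1)) (q^2) n‖ := by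
  have hq0 : (0:ℝ) ≤ ‖q‖ := norm_nonneg _
  have hzq0 : (0:ℝ) ≤ ‖z*q‖ := norm_nonneg _
  have hq2 : (0:ℝ) < 1 - ‖q‖^2 := by nlinarith
  have hδ : (0:ℝ) < 1 - ‖z*q‖ := by linarith
  rw [qPoch, norm_prod]
  have hfac : ∀ k ∈ Finset.range n,
      Real.exp (-((‖z*q‖ * ‖q‖^(2*k))/(1-‖z*q‖))) ≤ ‖1 - z*q^(2*N+1) * (q^2)^k‖ := by
    intro k _
    have hnorm : ‖z*q^(2*N+1) * (q^2)^k‖ = ‖z*q‖ * ‖q‖^(2*(N+k)) := by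
      have : z*q^(2*N+1) * (q^2)^k = (z*q) * q^(2*(N+k)) := by ring
      rw [this, norm_mul, norm_pow]
    have hle1 : ‖z*q‖ * ‖q‖^(2*(N+k)) ≤ ‖z*q‖ * ‖q‖^(2*k) := by
      apply mul_le_mul_of_nonneg_left _ hzq0
      apply pow_le_pow_of_le_one hq0 hq.le
      omega
    have hle2 : ‖z*q‖ * ‖q‖^(2*k) ≤ ‖z*q‖ := by
      nlinarith [pow_le_one₀ hq0 hq.le (n := 2*k)]
    have h1 : 1 - ‖z*q^(2*N+1) * (q^2)^k‖ ≤ ‖1 - z*q^(2*N+1) * (q^2)^k‖ := by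
      have := norm_sub_norm_le (1:ℂ) (z*q^(2*N+1) * (q^2)^k)
      simpa using this
    have h2 : Real.exp (-((‖z*q‖ * ‖q‖^(2*k))/(1-‖z*q‖))) ≤ 1 - ‖z*q‖ * ‖q‖^(2*k) :=
      exp_le_one_sub hzq (by positivity) hle2
    refine h2.trans (le_trans ?_ h1)
    rw [hnorm]
    linarith
  refine le_trans ?_ (Finset.prod_le_prod (fun k _ => (Real.exp_pos _).le) hfac)
  rw [← Real.exp_sum]
  apply Real.exp_le_exp.mpr
  have hgeom : ∑ x ∈ Finset.range n, ‖z*q‖ * ‖q‖^(2*x)/(1-‖z*q‖)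
      ≤ ‖z*q‖/((1-‖z*q‖)*(1-‖q‖^2)) := by
    have hr : ‖q‖^2 < 1 := by nlinarith
    have hs : Summable (fun x : ℕ => (‖q‖^2)^x) :=
      summable_geometric_of_lt_one (by positivity) hr
    have hst := Summable.sum_le_tsum (Finset.range n) (fun i _ => by positivity) hs
    rw [tsum_geometric_of_lt_one (by positivity) hr] at hst
    have hrw : ∀ x, ‖z*q‖ * ‖q‖^(2*x)/(1-‖z*q‖) = (‖z*q‖/(1-‖z*q‖)) * (‖q‖^2)^x := by
      intro x; rw [pow_mul]; ring
    calc ∑ x ∈ Finset.range n, ‖z*q‖ * ‖q‖^(2*x)/(1-‖z*q‖)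
        = (‖z*q‖/(1-‖z*q‖)) * ∑ x ∈ Finset.range n, (‖q‖^2)^x := by
          rw [Finset.mul_sum]; exact Finset.sum_congr rfl (fun x _ => hrw x)
      _ ≤ (‖z*q‖/(1-‖z*q‖)) * (1-‖q‖^2)⁻¹ := by
          apply mul_le_mul_of_nonneg_left hst (by positivity)
      _ = ‖z*q‖/((1-‖z*q‖)*(1-‖q‖^2)) := by field_simp
  have : ∑ x ∈ Finset.range n, -(‖z*q‖ * ‖q‖^(2*x)/(1-‖z*q‖))
      = -∑ x ∈ Finset.range n, ‖z*q‖ * ‖q‖^(2*x)/(1-‖z*q‖) := by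
    simp
  rw [this]
  linarith


noncomputable def cLB (q z : ℂ) : ℝ := Real.exp (-(‖z*q‖ / ((1-‖z*q‖)*(1-‖q‖^2))))


noncomputable def Ft (q w : ℂ) (n : ℕ) : ℂ := (w^n * q^(n^2+n) / qPoch (w*q) (q^2) (n+1))^2
noncomputable def Gt (q w : ℂ) (n : ℕ) : ℂ := w^n * q^n / qPoch (w*q) (q^2) (n+1)
noncomputable def Ct (q w : ℂ) (n : ℕ) : ℂ := w^n * q^n / qPoch (w*q^3) (q^2) n

lemma cLB_pos (q z : ℂ) : 0 < cLB q z := Real.exp_pos _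

lemma qPoch_norm_ge (q z : ℂ) (hq : ‖q‖ < 1) (hzq : ‖z*q‖ < 1) (N n : ℕ) :
    cLB q z ≤ ‖qPoch (z*q^(2*N+1)) (q^2) n‖ :=
  qPoch_norm_ge_exp q z hq hzq N n

section main
variable (q z : ℂ) (hq : ‖q‖ < 1) (hzq : ‖z*q‖ < 1)
include hq hzq

lemma qPoch_ne_zero (N n : ℕ) : qPoch (z*q^(2*N+1)) (q^2) n ≠ 0 := by
  intro h
  have := qPoch_norm_ge q z hq hzq N n
  rw [h, norm_zero] at this
  exact absurd (lt_of_lt_of_le (cLB_pos q z) this) (lt_irrefl _)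

lemma div_bound (N n m : ℕ) (A : ℂ) (hA : ‖A‖ ≤ ‖z*q‖^n) :
    ‖A / qPoch (z*q^(2*N+1)) (q^2) m‖ ≤ ‖z*q‖^n / cLB q z := by
  rw [norm_div]
  exact div_le_div₀ (by positivity) hA (cLB_pos q z) (qPoch_norm_ge q z hq hzq N m)

lemma norm_Gt_le (N n : ℕ) : ‖Gt q (z*q^(2*N)) n‖ ≤ (1/cLB q z) * ‖z*q‖^n := by
  have harg : z*q^(2*N) * q = z*q^(2*N+1) := by ring
  have hnum : ‖(z*q^(2*N))^n * q^n‖ ≤ ‖z*q‖^n := by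
    have : (z*q^(2*N))^n * q^n = (z*q)^n * (q^(2*N))^n := by ring
    rw [this, norm_mul, norm_pow, norm_pow, norm_pow]
    have h1 : ‖q‖^(2*N) ≤ 1 := pow_le_one₀ (norm_nonneg _) hq.le
    have h2 : (‖q‖^(2*N))^n ≤ 1 := pow_le_one₀ (by positivity) h1
    nlinarith [pow_nonneg (norm_nonneg (z*q)) n]
  rw [Gt, harg, one_div, inv_mul_eq_div]
  exact div_bound q z hq hzq N n (n+1) _ hnum

lemma norm_Ft_le (N n : ℕ) : ‖Ft q (z*q^(2*N)) n‖ ≤ (1/(cLB q z)^2) * (‖z*q‖^2)^n := by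
  have harg : z*q^(2*N) * q = z*q^(2*N+1) := by ring
  have hnum : ‖(z*q^(2*N))^n * q^(n^2+n)‖ ≤ ‖z*q‖^n := by
    have : (z*q^(2*N))^n * q^(n^2+n) = (z*q)^n * (q^(2*N))^n * q^(n^2) := by
      rw [pow_add]; ring
    rw [this, norm_mul, norm_mul, norm_pow, norm_pow, norm_pow, norm_pow]
    have h1 : ‖q‖^(2*N) ≤ 1 := pow_le_one₀ (norm_nonneg _) hq.le
    have h2 : (‖q‖^(2*N))^n ≤ 1 := pow_le_one₀ (by positivity) h1
    have h3 : ‖q‖^(n^2) ≤ 1 := pow_le_one₀ (norm_nonneg _) hq.le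
    nlinarith [pow_nonneg (norm_nonneg (z*q)) n, pow_nonneg (norm_nonneg q) (n^2),
      mul_nonneg (pow_nonneg (norm_nonneg (z*q)) n) (pow_nonneg (pow_nonneg (norm_nonneg q) (2*N)) n)]
  have hterm := div_bound q z hq hzq N n (n+1) _ hnum
  rw [Ft, norm_pow, harg]
  calc ‖(z*q^(2*N))^n * q^(n^2+n) / qPoch (z*q^(2*N+1)) (q^2) (n+1)‖^2
      ≤ (‖z*q‖^n / cLB q z)^2 := by
        apply pow_le_pow_left₀ (norm_nonneg _) hterm
    _ = (1/(cLB q z)^2) * (‖z*q‖^2)^n := by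
        rw [div_pow, ← pow_mul, ← pow_mul']
        ring
  done

lemma norm_Ct_le (N n : ℕ) : ‖Ct q (z*q^(2*N)) n‖ ≤ (1/cLB q z) * ‖z*q‖^n := by
  have harg : z*q^(2*N) * q^3 = z*q^(2*(N+1)+1) := by ring
  have hnum : ‖(z*q^(2*N))^n * q^n‖ ≤ ‖z*q‖^n := by
    have : (z*q^(2*N))^n * q^n = (z*q)^n * (q^(2*N))^n := by ring
    rw [this, norm_mul, norm_pow, norm_pow, norm_pow]
    have h1 : ‖q‖^(2*N) ≤ 1 := pow_le_one₀ (norm_nonneg _) hq.le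
    have h2 : (‖q‖^(2*N))^n ≤ 1 := pow_le_one₀ (by positivity) h1
    nlinarith [pow_nonneg (norm_nonneg (z*q)) n]
  rw [Ct, harg, one_div, inv_mul_eq_div]
  exact div_bound q z hq hzq (N+1) n n _ hnum

lemma summable_Gt (N : ℕ) : Summable (Gt q (z*q^(2*N))) := by
  apply Summable.of_norm_bounded (Summable.mul_left _ (summable_geometric_of_lt_one (norm_nonneg _) hzq))
  exact norm_Gt_le q z hq hzq N

lemma summable_Ft (N : ℕ) : Summable (Ft q (z*q^(2*N))) := by
  have h2 : ‖z*q‖^2 < 1 := by nlinarith [norm_nonneg (z*q)]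
  apply Summable.of_norm_bounded (Summable.mul_left _ (summable_geometric_of_lt_one (by positivity) h2))
  exact norm_Ft_le q z hq hzq N

lemma summable_Ct (N : ℕ) : Summable (Ct q (z*q^(2*N))) := by
  apply Summable.of_norm_bounded (Summable.mul_left _ (summable_geometric_of_lt_one (norm_nonneg _) hzq))
  exact norm_Ct_le q z hq hzq N

end main


section main
variable (q w : ℂ) (hw : 1 - w*q ≠ 0) (hP : ∀ n, qPoch (w*q^3) (q^2) n ≠ 0)
include hw hP

-- termwise for F
lemma Ft_step (n : ℕ) :
    (1 - w*q)^2 * Ft q w (n+1) = w^2*q^4 * Ft q (w*q^2) n := by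
  have h1 : qPoch (w*q) (q^2) (n+2) = (1 - w*q) * qPoch (w*q^3) (q^2) (n+1) := by
    have := qPoch_succ' (w*q) (q^2) (n+1)
    rw [this]; ring_nf
  have h2 : (w*q^2)*q = w*q^3 := by ring
  rw [Ft, Ft, h1, h2]
  have hQ := hP (n+1)
  field_simp
  ring

lemma Ft_zero_term : (1 - w*q)^2 * Ft q w 0 = 1 := by
  rw [Ft, qPoch_one]
  field_simp
  simp

lemma Gt_mul (n : ℕ) : (1 - w*q) * Gt q w n = Ct q w n := by
  have h1 : qPoch (w*q) (q^2) (n+1) = (1 - w*q) * qPoch (w*q^3) (q^2) n := by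
    have := qPoch_succ' (w*q) (q^2) n
    rw [this]; ring_nf
  rw [Gt, Ct, h1]
  have hQ := hP n
  field_simp

lemma Ct_step (n : ℕ) :
    Ct q w (n+1) - (w*q) * Ct q w n = w^2*q^4 * Gt q (w*q^2) n := by
  have h1 : qPoch (w*q^3) (q^2) (n+1) = qPoch (w*q^3) (q^2) n * (1 - w*q^3*(q^2)^n) :=
    qPoch_succ _ _ n
  have h2 : (w*q^2)*q = w*q^3 := by ring
  rw [Ct, Ct, Gt, h2, h1]
  have hQ1 := hP n
  have hQ2 := hP (n+1)
  rw [h1] at hQ2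
  have hQ3 : 1 - w*q^3*(q^2)^n ≠ 0 := right_ne_zero_of_mul hQ2
  have hQ4 : 1 - w*q^3*q^(n*2) ≠ 0 := by rw [mul_comm n 2, pow_mul]; exact hQ3
  field_simp
  ring
end main

section main
variable (q w : ℂ) (hw : 1 - w*q ≠ 0) (hP : ∀ n, qPoch (w*q^3) (q^2) n ≠ 0)
include hw hP

lemma FE_F (hF : Summable (Ft q w)) :
    (1 - w*q)^2 * ∑' n, Ft q w n = 1 + w^2*q^4 * ∑' n, Ft q (w*q^2) n := by
  calc (1 - w*q)^2 * ∑' n, Ft q w n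
      = ∑' n, (1 - w*q)^2 * Ft q w n := (tsum_mul_left).symm
    _ = (1 - w*q)^2 * Ft q w 0 + ∑' n, (1 - w*q)^2 * Ft q w (n+1) :=
        (hF.mul_left _).tsum_eq_zero_add
    _ = 1 + w^2*q^4 * ∑' n, Ft q (w*q^2) n := by
        rw [Ft_zero_term q w hw hP]
        congr 1
        rw [← tsum_mul_left]
        exact tsum_congr fun n => Ft_step q w hw hP n

lemma FE_G (hG : Summable (Gt q w)) (hC : Summable (Ct q w)) :
    (1 - w*q)^2 * ∑' n, Gt q w n = 1 + w^2*q^4 * ∑' n, Gt q (w*q^2) n := by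
  have hCt : ∑' n, Ct q w n = (1-w*q) * ∑' n, Gt q w n := by
    rw [← tsum_mul_left]; exact tsum_congr fun n => (Gt_mul q w hw hP n).symm
  have hC1 : Summable (fun n => Ct q w (n+1)) := (summable_nat_add_iff 1).2 hC
  have hshift : ∑' n, Ct q w (n+1) = (∑' n, Ct q w n) - Ct q w 0 := by
    have h := hC.tsum_eq_zero_add
    rw [h]; ring
  have hsub : ∑' n, (Ct q w (n+1) - (w*q) * Ct q w n)
      = (∑' n, Ct q w (n+1)) - (w*q) * ∑' n, Ct q w n := by
    rw [Summable.tsum_sub hC1 (hC.mul_left _), tsum_mul_left]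
  have hstep : ∑' n, (Ct q w (n+1) - (w*q) * Ct q w n) = w^2*q^4 * ∑' n, Gt q (w*q^2) n := by
    rw [← tsum_mul_left]; exact tsum_congr fun n => Ct_step q w hw hP n
  have hC0 : Ct q w 0 = 1 := by simp [Ct, qPoch_zero]
  have key : (1-w*q) * ∑' n, Ct q w n = 1 + w^2*q^4 * ∑' n, Gt q (w*q^2) n := by
    rw [← hstep, hsub, hshift, hC0]; ring
  rw [pow_two, mul_assoc, ← hCt, key]
end main

section main
variable (q z : ℂ) (hq : ‖q‖ < 1) (hzq : ‖z*q‖ < 1) (hden : ∀ k : ℕ, 1 - z * q ^ (2 * k + 1) ≠ 0)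
include hq hzq hden

theorem main_eq :
    ∑' n : ℕ, Ft q z n = ∑' n : ℕ, Gt q z n := by
  set c := cLB q z with hc
  have hc0 := cLB_pos q z
  have hzq0 : (0:ℝ) ≤ ‖z*q‖ := norm_nonneg _
  have hδ : (0:ℝ) < 1 - ‖z*q‖ := by linarith
  -- the difference sequence
  set D : ℕ → ℂ := fun N => (∑' n, Ft q (z*q^(2*N)) n) - ∑' n, Gt q (z*q^(2*N)) n with hD
  set u : ℕ → ℂ := fun N => (z*q^(2*N))^2*q^4 / (1 - z*q^(2*N+1))^2 with hu
  -- basic rewrites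
  have hwq : ∀ N : ℕ, (z*q^(2*N)) * q = z*q^(2*N+1) := fun N => by ring
  have hwq3 : ∀ N : ℕ, (z*q^(2*N)) * q^3 = z*q^(2*(N+1)+1) := fun N => by ring
  have hwq2 : ∀ N : ℕ, (z*q^(2*N)) * q^2 = z*q^(2*(N+1)) := fun N => by ring
  have hw : ∀ N : ℕ, 1 - (z*q^(2*N))*q ≠ 0 := fun N => by rw [hwq N]; exact hden N
  have hP : ∀ N : ℕ, ∀ n, qPoch ((z*q^(2*N))*q^3) (q^2) n ≠ 0 := fun N n => by
    rw [hwq3 N]; exact qPoch_ne_zero q z hq hzq (N+1) n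
  -- step relation
  have hstep : ∀ N : ℕ, D N = u N * D (N+1) := by
    intro N
    have hF := FE_F q (z*q^(2*N)) (hw N) (hP N) (summable_Ft q z hq hzq N)
    have hG := FE_G q (z*q^(2*N)) (hw N) (hP N) (summable_Gt q z hq hzq N)
      (summable_Ct q z hq hzq N)
    rw [hwq2 N] at hF hG
    have hsub : (1 - (z*q^(2*N))*q)^2 * D N = (z*q^(2*N))^2*q^4 * D (N+1) := by
      simp only [hD]
      rw [mul_sub, mul_sub, hF, hG]
      ring
    have hne : ((1 : ℂ) - z*q^(2*N+1))^2 ≠ 0 := pow_ne_zero _ (hden N)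
    rw [hwq N] at hsub
    simp only [hu]
    rw [div_mul_eq_mul_div, eq_div_iff hne]
    linear_combination hsub
  -- iterated relation
  have hiter : ∀ N : ℕ, D 0 = (∏ k ∈ Finset.range N, u k) * D N := by
    intro N
    induction N with
    | zero => simp
    | succ n ih =>
      rw [ih, hstep n, Finset.prod_range_succ]
      ring
  -- uniform bound on D
  set M : ℝ := (1/c^2) * (1-‖z*q‖^2)⁻¹ + (1/c) * (1-‖z*q‖)⁻¹ with hM
  have hzq2 : ‖z*q‖^2 < 1 := by nlinarith
  have hDb : ∀ N : ℕ, ‖D N‖ ≤ M := by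
    intro N
    have h1 : ‖∑' n, Ft q (z*q^(2*N)) n‖ ≤ (1/c^2) * (1-‖z*q‖^2)⁻¹ := by
      refine (norm_tsum_le_tsum_norm ((summable_Ft q z hq hzq N).norm)).trans ?_
      have hs : Summable (fun n : ℕ => (1/c^2) * (‖z*q‖^2)^n) :=
        Summable.mul_left _ (summable_geometric_of_lt_one (by positivity) hzq2)
      refine (Summable.tsum_le_tsum (norm_Ft_le q z hq hzq N) ((summable_Ft q z hq hzq N).norm) hs).trans ?_
      rw [tsum_mul_left, tsum_geometric_of_lt_one (by positivity) hzq2]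
    have h2 : ‖∑' n, Gt q (z*q^(2*N)) n‖ ≤ (1/c) * (1-‖z*q‖)⁻¹ := by
      refine (norm_tsum_le_tsum_norm ((summable_Gt q z hq hzq N).norm)).trans ?_
      have hs : Summable (fun n : ℕ => (1/c) * ‖z*q‖^n) :=
        Summable.mul_left _ (summable_geometric_of_lt_one hzq0 hzq)
      refine (Summable.tsum_le_tsum (norm_Gt_le q z hq hzq N) ((summable_Gt q z hq hzq N).norm) hs).trans ?_
      rw [tsum_mul_left, tsum_geometric_of_lt_one hzq0 hzq]
    calc ‖D N‖ ≤ ‖∑' n, Ft q (z*q^(2*N)) n‖ + ‖∑' n, Gt q (z*q^(2*N)) n‖ := norm_sub_le _ _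
      _ ≤ M := by rw [hM]; linarith
  have hM0 : 0 ≤ M := le_trans (norm_nonneg _) (hDb 0)
  -- bound on u
  have hub : ∀ N : ℕ, ‖u N‖ ≤ ((‖z*q‖^2*‖q‖^2)/(1-‖z*q‖)^2) * (‖q‖^4)^N := by
    intro N
    simp only [hu]
    rw [norm_div]
    have hnumeq : (z*q^(2*N))^2*q^4 = ((z*q)^2*q^2) * (q^4)^N := by ring
    have hnum : ‖(z*q^(2*N))^2*q^4‖ = (‖z*q‖^2*‖q‖^2) * (‖q‖^4)^N := by
      rw [hnumeq, norm_mul, norm_mul, norm_pow, norm_pow, norm_pow, norm_pow]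
    have hden1 : (1-‖z*q‖)^2 ≤ ‖(1 - z*q^(2*N+1))^2‖ := by
      rw [norm_pow]
      have hx : ‖z*q^(2*N+1)‖ ≤ ‖z*q‖ := by
        have : z*q^(2*N+1) = (z*q)*q^(2*N) := by ring
        rw [this, norm_mul, norm_pow]
        nlinarith [pow_le_one₀ (norm_nonneg q) hq.le (n := 2*N), norm_nonneg (z*q),
          pow_nonneg (norm_nonneg q) (2*N)]
      have h1 : 1 - ‖z*q^(2*N+1)‖ ≤ ‖1 - z*q^(2*N+1)‖ := by
        have := norm_sub_norm_le (1:ℂ) (z*q^(2*N+1))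
        simpa using this
      have h2 : 1 - ‖z*q‖ ≤ ‖1 - z*q^(2*N+1)‖ := by linarith
      exact pow_le_pow_left₀ hδ.le h2 2
    rw [hnum]
    have step1 : ‖z*q‖^2*‖q‖^2*(‖q‖^4)^N / ‖(1 - z*q^(2*N+1))^2‖
        ≤ ‖z*q‖^2*‖q‖^2*(‖q‖^4)^N / (1-‖z*q‖)^2 :=
      div_le_div_of_nonneg_left (by positivity) (by positivity) hden1
    refine step1.trans (le_of_eq (by ring))
  -- limit argument
  set Cu : ℝ := (‖z*q‖^2*‖q‖^2)/(1-‖z*q‖)^2 with hCu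
  have hq4 : ‖q‖^4 < 1 := pow_lt_one₀ (norm_nonneg q) hq (by norm_num)
  have htend : Filter.Tendsto (fun N : ℕ => Cu * (‖q‖^4)^N) Filter.atTop (nhds 0) := by
    have h := tendsto_pow_atTop_nhds_zero_of_lt_one (by positivity : (0:ℝ) ≤ ‖q‖^4) hq4
    simpa using h.const_mul Cu
  have hev : ∀ᶠ N in Filter.atTop, Cu * (‖q‖^4)^N < 1/2 :=
    htend.eventually (gt_mem_nhds (by norm_num))
  obtain ⟨K, hK⟩ := Filter.eventually_atTop.1 hev
  have hKu : ∀ k, K ≤ k → ‖u k‖ ≤ 1/2 := fun k hk => (hub k).trans (hK k hk).le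
  set PK : ℝ := ∏ k ∈ Finset.range K, ‖u k‖ with hPK
  have hPK0 : 0 ≤ PK := Finset.prod_nonneg (fun _ _ => norm_nonneg _)
  have hbound : ∀ m : ℕ, ‖D 0‖ ≤ PK * (1/2)^m * M := by
    intro m
    calc ‖D 0‖ = ‖∏ k ∈ Finset.range (K+m), u k‖ * ‖D (K+m)‖ := by
          rw [hiter (K+m), norm_mul]
      _ ≤ ‖∏ k ∈ Finset.range (K+m), u k‖ * M :=
          mul_le_mul_of_nonneg_left (hDb _) (norm_nonneg _)
      _ ≤ PK * (1/2)^m * M := by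
          apply mul_le_mul_of_nonneg_right _ hM0
          rw [norm_prod, Finset.prod_range_add]
          apply mul_le_mul_of_nonneg_left _ hPK0
          calc ∏ j ∈ Finset.range m, ‖u (K+j)‖
              ≤ ∏ _j ∈ Finset.range m, (1/2 : ℝ) :=
                Finset.prod_le_prod (fun _ _ => norm_nonneg _)
                  (fun j _ => hKu (K+j) (by omega))
            _ = (1/2)^m := by simp
  have hfin : Filter.Tendsto (fun m : ℕ => PK * (1/2)^m * M) Filter.atTop (nhds 0) := by
    have h := tendsto_pow_atTop_nhds_zero_of_lt_one (by norm_num : (0:ℝ) ≤ 1/2) (by norm_num)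
    have := (h.const_mul PK).mul_const M
    simpa using this
  have hD0 : ‖D 0‖ ≤ 0 := ge_of_tendsto' hfin hbound
  have hD0' : D 0 = 0 := by
    have := norm_le_zero_iff.1 hD0
    exact this
  have : (∑' n, Ft q (z*q^(2*0)) n) = ∑' n, Gt q (z*q^(2*0)) n := sub_eq_zero.1 hD0'
  simpa using this
end main


end Omega212Aux

theorem omega_spec_2_12 (q z : ℂ) (hq : ‖q‖ < 1) (hzq : ‖z * q‖ < 1)
    (hden : ∀ k : ℕ, 1 - z * q ^ (2 * k + 1) ≠ 0) :
    ∑' n : ℕ, (z ^ n * q ^ (n ^ 2 + n) / qPoch (z * q) (q ^ 2) (n + 1)) ^ 2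
      = ∑' n : ℕ, z ^ n * q ^ n / qPoch (z * q) (q ^ 2) (n + 1) := by
  have h := Omega212Aux.main_eq q z hq hzq hden
  simp only [Omega212Aux.Ft, Omega212Aux.Gt] at h
  exact h
end

section
/- For complex q, z with |q| < 1, z ≠ 0, |zq| < 1, and |q/z| < 1, Σ_{n≥0} z^{−n} qⁿ / (zq; q²)_{n+1} = Σ_{n≥0} zⁿ qⁿ / (q/z; q²)_{n+1}. -/
/-!
Expanding `1 / (x; Q)_{n+1} = ∑ₘ [n+m, n]_Q xᵐ` turns `∑ₙ yⁿ / (x; Q)_{n+1}` into the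
double series `∑_{n,m} [n+m, n]_Q yⁿ xᵐ`, which is symmetric in `x` and `y` because
`[n+m, n]_Q = [m+n, m]_Q` (conjugation of the partitions fitting in an `n × m` box).
For `‖x‖, ‖y‖, ‖Q‖ < 1` the double series converges absolutely, since
`‖[n+m, n]_Q‖ ≤ 1 / (‖Q‖; ‖Q‖)_n` is bounded uniformly in `n`.
The theorem is the case `Q = q²`, `x = z q`, `y = q / z`.
-/

open scoped BigOperators

open Finset

/-- `gaussBinom Q n m` is the Gaussian binomial coefficient `[n+m, n]_Q`. -/
def gaussBinom {R : Type*} [Semiring R] (Q : R) : ℕ → ℕ → R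
  | 0, _ => 1
  | _ + 1, 0 => 1
  | n + 1, m + 1 => gaussBinom Q n (m + 1) + Q ^ (n + 1) * gaussBinom Q (n + 1) m

section Pascal

variable {R : Type*} [Semiring R] (Q : R)

@[simp]
theorem gaussBinom_zero_left (m : ℕ) : gaussBinom Q 0 m = 1 := by
  rw [gaussBinom]

@[simp]
theorem gaussBinom_zero_right (n : ℕ) : gaussBinom Q n 0 = 1 := by
  cases n <;> rw [gaussBinom]

theorem gaussBinom_succ_succ (n m : ℕ) :
    gaussBinom Q (n + 1) (m + 1)
      = gaussBinom Q n (m + 1) + Q ^ (n + 1) * gaussBinom Q (n + 1) m := by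
  rw [gaussBinom]

end Pascal

theorem gaussBinom_succ_succ' {R : Type*} [CommRing R] (Q : R) (n m : ℕ) :
    gaussBinom Q (n + 1) (m + 1)
      = gaussBinom Q (n + 1) m + Q ^ (m + 1) * gaussBinom Q n (m + 1) := by
  induction n generalizing m with
  | zero =>
    induction m with
    | zero => simp [gaussBinom_succ_succ, add_comm]
    | succ m ih =>
      have h₁ := gaussBinom_succ_succ Q 0 (m + 1)
      have h₂ := gaussBinom_succ_succ Q 0 m
      simp only [gaussBinom_zero_left] at h₁ h₂ ih ⊢
      linear_combination h₁ + Q * ih - h₂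
  | succ n ih =>
    induction m with
    | zero =>
      have h₁ := gaussBinom_succ_succ Q (n + 1) 0
      have h₂ := gaussBinom_succ_succ Q n 0
      have h₃ := ih 0
      simp only [gaussBinom_zero_right] at h₁ h₂ h₃ ⊢
      linear_combination h₁ + h₃ - Q * h₂
    | succ m ihm =>
      linear_combination gaussBinom_succ_succ Q (n + 1) (m + 1) + ih (m + 1) + Q ^ (n + 2) * ihm
        - gaussBinom_succ_succ Q (n + 1) m - Q ^ (m + 2) * gaussBinom_succ_succ Q n (m + 1)

theorem gaussBinom_comm {R : Type*} [CommRing R] (Q : R) (n m : ℕ) :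
    gaussBinom Q n m = gaussBinom Q m n := by
  induction n generalizing m with
  | zero => simp
  | succ n ihn =>
    induction m with
    | zero => simp
    | succ m ihm => rw [gaussBinom_succ_succ, ihn, ihm, gaussBinom_succ_succ']

theorem norm_gaussBinom_le_prod {R : Type*} [NormedCommRing R] [NormOneClass R] {Q : R}
    (hQ : ‖Q‖ < 1) (n m : ℕ) :
    ‖gaussBinom Q n m‖ ≤ ∏ k ∈ range n, (1 - ‖Q‖ ^ (k + 1))⁻¹ := by
  have hpos (k : ℕ) : 0 < 1 - ‖Q‖ ^ (k + 1) :=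
    sub_pos.2 (pow_lt_one₀ (norm_nonneg Q) hQ k.succ_ne_zero)
  induction n generalizing m with
  | zero => simp
  | succ n ihn =>
    induction m with
    | zero =>
      rw [gaussBinom_zero_right, norm_one]
      exact one_le_prod fun k _ ↦ one_le_inv₀ (hpos k) |>.2 (by simp)
    | succ m ihm =>
      rw [gaussBinom_succ_succ]
      calc _ ≤ ‖gaussBinom Q n (m + 1)‖ + ‖Q ^ (n + 1) * gaussBinom Q (n + 1) m‖ :=
            norm_add_le _ _
        _ ≤ ‖gaussBinom Q n (m + 1)‖ + ‖Q‖ ^ (n + 1) * ‖gaussBinom Q (n + 1) m‖ := by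
            grw [norm_mul_le, norm_pow_le' Q n.succ_pos]
        _ ≤ ∏ k ∈ range n, (1 - ‖Q‖ ^ (k + 1))⁻¹
              + ‖Q‖ ^ (n + 1) * ∏ k ∈ range (n + 1), (1 - ‖Q‖ ^ (k + 1))⁻¹ := by
            grw [ihn, ihm]
        _ = ∏ k ∈ range (n + 1), (1 - ‖Q‖ ^ (k + 1))⁻¹ := by
            rw [prod_range_succ]
            field_simp [(hpos n).ne']
            ring

theorem prod_inv_one_sub_pow_le_exp {t : ℝ} (ht₀ : 0 ≤ t) (ht₁ : t < 1) (n : ℕ) :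
    ∏ k ∈ range n, (1 - t ^ (k + 1))⁻¹ ≤ Real.exp ((1 - t)⁻¹ ^ 2) := by
  have hpos : 0 < 1 - t := sub_pos.2 ht₁
  calc ∏ k ∈ range n, (1 - t ^ (k + 1))⁻¹ ≤ ∏ k ∈ range n, (1 + t ^ k / (1 - t)) := by
        refine prod_le_prod (fun k _ ↦ ?_) fun k _ ↦ ?_
        · have : t ^ (k + 1) < 1 := pow_lt_one₀ ht₀ ht₁ k.succ_ne_zero
          exact inv_nonneg.2 (by linarith)
        · have hle : t ^ (k + 1) ≤ t := pow_le_of_le_one ht₀ ht₁.le k.succ_ne_zero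
          have hk : t ^ (k + 1) ≤ t ^ k := pow_le_pow_of_le_one ht₀ ht₁.le k.le_succ
          have hsub : 0 < 1 - t ^ (k + 1) := by linarith
          calc (1 - t ^ (k + 1))⁻¹ = 1 + t ^ (k + 1) / (1 - t ^ (k + 1)) := by
                field_simp; ring
            _ ≤ 1 + t ^ k / (1 - t) := by gcongr
    _ ≤ Real.exp (∑ k ∈ range n, t ^ k / (1 - t)) :=
        Real.prod_one_add_le_exp_sum _ fun k ↦ by positivity
    _ ≤ Real.exp ((1 - t)⁻¹ ^ 2) := by
        gcongr
        rw [← sum_div, range_eq_Ico, sq, ← div_eq_mul_inv, inv_eq_one_div]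
        gcongr
        simpa using geom_sum_Ico_le_of_lt_one (m := 0) (n := n) ht₀ ht₁

theorem exists_norm_gaussBinom_le {R : Type*} [NormedCommRing R] [NormOneClass R] {Q : R}
    (hQ : ‖Q‖ < 1) : ∃ C, ∀ n m, ‖gaussBinom Q n m‖ ≤ C :=
  ⟨_, fun n m ↦ (norm_gaussBinom_le_prod hQ n m).trans
    (prod_inv_one_sub_pow_le_exp (norm_nonneg Q) hQ n)⟩

section GeneratingFunction

variable {Q x y : ℂ}

theorem summable_gaussBinom_mul_pow (hQ : ‖Q‖ < 1) (hx : ‖x‖ < 1) (n : ℕ) :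
    Summable fun m ↦ gaussBinom Q n m * x ^ m := by
  obtain ⟨C, hC⟩ := exists_norm_gaussBinom_le hQ
  refine .of_norm_bounded ((summable_geometric_of_lt_one (norm_nonneg x) hx).mul_left C)
    fun m ↦ ?_
  rw [norm_mul, norm_pow]
  gcongr
  exact hC n m

theorem tsum_gaussBinom_mul_pow_succ (hQ : ‖Q‖ < 1) (hx : ‖x‖ < 1) (n : ℕ) :
    ∑' m, gaussBinom Q (n + 1) m * x ^ m
      = ∑' m, gaussBinom Q n m * x ^ m
        + x * Q ^ (n + 1) * ∑' m, gaussBinom Q (n + 1) m * x ^ m := by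
  have hs := summable_gaussBinom_mul_pow hQ hx
  conv_lhs => rw [(hs (n + 1)).tsum_eq_zero_add]
  rw [(hs n).tsum_eq_zero_add, ← tsum_mul_left, add_assoc,
    ← ((summable_nat_add_iff 1).2 (hs n)).tsum_add ((hs (n + 1)).mul_left _)]
  congr 1
  · simp
  · exact tsum_congr fun m ↦ by rw [gaussBinom_succ_succ]; ring

theorem tsum_gaussBinom_mul_pow (hQ : ‖Q‖ < 1) (hx : ‖x‖ < 1) (n : ℕ) :
    ∑' m, gaussBinom Q n m * x ^ m = (qPoch x Q (n + 1))⁻¹ := by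
  induction n with
  | zero => simp [qPoch, tsum_geometric_of_norm_lt_one hx]
  | succ n ih =>
    have hlt : ‖x * Q ^ (n + 1)‖ < 1 := by
      rw [norm_mul, norm_pow]
      exact mul_lt_one_of_nonneg_of_lt_one_left (norm_nonneg x) hx
        (pow_le_one₀ (norm_nonneg Q) hQ.le)
    have hne : 1 - x * Q ^ (n + 1) ≠ 0 := sub_ne_zero.2 fun h ↦ by simp [← h] at hlt
    have hrec := tsum_gaussBinom_mul_pow_succ hQ hx n
    rw [qPoch, prod_range_succ, ← qPoch, mul_inv, ← ih]
    field_simp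
    linear_combination hrec

theorem summable_pow_mul_gaussBinom_mul_pow (hQ : ‖Q‖ < 1) (hx : ‖x‖ < 1)
    (hy : ‖y‖ < 1) :
    Summable fun p : ℕ × ℕ ↦ y ^ p.1 * (gaussBinom Q p.1 p.2 * x ^ p.2) := by
  obtain ⟨C, hC⟩ := exists_norm_gaussBinom_le hQ
  refine .of_norm_bounded (((summable_geometric_of_lt_one (norm_nonneg y) hy).mul_of_nonneg
    (summable_geometric_of_lt_one (norm_nonneg x) hx) (fun _ ↦ by positivity)
    fun _ ↦ by positivity).mul_left C) fun p ↦ ?_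
  rw [norm_mul, norm_mul, norm_pow, norm_pow]
  calc ‖y‖ ^ p.1 * (‖gaussBinom Q p.1 p.2‖ * ‖x‖ ^ p.2)
      _ ≤ ‖y‖ ^ p.1 * (C * ‖x‖ ^ p.2) := by grw [hC]
      _ = C * (‖y‖ ^ p.1 * ‖x‖ ^ p.2) := by ring

theorem tsum_pow_div_qPoch_eq_tsum_prod (hQ : ‖Q‖ < 1) (hx : ‖x‖ < 1) (hy : ‖y‖ < 1) :
    ∑' n, y ^ n / qPoch x Q (n + 1)
      = ∑' p : ℕ × ℕ, y ^ p.1 * (gaussBinom Q p.1 p.2 * x ^ p.2) := by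
  rw [(summable_pow_mul_gaussBinom_mul_pow hQ hx hy).tsum_prod'
    fun n ↦ (summable_gaussBinom_mul_pow hQ hx n).mul_left (y ^ n)]
  refine tsum_congr fun n ↦ ?_
  dsimp only
  rw [tsum_mul_left, tsum_gaussBinom_mul_pow hQ hx, div_eq_mul_inv]

theorem tsum_pow_div_qPoch_comm (hQ : ‖Q‖ < 1) (hx : ‖x‖ < 1) (hy : ‖y‖ < 1) :
    ∑' n, y ^ n / qPoch x Q (n + 1) = ∑' n, x ^ n / qPoch y Q (n + 1) := by
  rw [tsum_pow_div_qPoch_eq_tsum_prod hQ hx hy, tsum_pow_div_qPoch_eq_tsum_prod hQ hy hx,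
    ← (Equiv.prodComm ℕ ℕ).tsum_eq]
  exact tsum_congr fun p ↦ by
    rw [Equiv.prodComm_apply, Prod.fst_swap, Prod.snd_swap, gaussBinom_comm Q p.2]
    ring

end GeneratingFunction

theorem omega_conjugate_symmetry_general (q z : ℂ) (hq : ‖q‖ < 1)
    (hzq : ‖z * q‖ < 1) (hqz : ‖q / z‖ < 1) :
    ∑' n : ℕ, z⁻¹ ^ n * q ^ n / qPoch (z * q) (q ^ 2) (n + 1)
      = ∑' n : ℕ, z ^ n * q ^ n / qPoch (q / z) (q ^ 2) (n + 1) := by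
  have hq2 : ‖q ^ 2‖ < 1 := by
    rw [norm_pow]
    exact pow_lt_one₀ (norm_nonneg q) hq two_ne_zero
  have hpow (n : ℕ) : z⁻¹ ^ n * q ^ n = (q / z) ^ n := by rw [← mul_pow, inv_mul_eq_div]
  simp_rw [hpow, ← mul_pow]
  exact tsum_pow_div_qPoch_comm hq2 hzq hqz

theorem omega_conjugate_symmetry (q z : ℂ) (hq : ‖q‖ < 1) (hz : z ≠ 0)
    (hzq : ‖z * q‖ < 1) (hqz : ‖q / z‖ < 1)
    (hdz : ∀ k : ℕ, 1 - z * q ^ (2 * k + 1) ≠ 0)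
    (hdz' : ∀ k : ℕ, 1 - (q / z) * q ^ (2 * k) ≠ 0) :
    ∑' n : ℕ, z⁻¹ ^ n * q ^ n / qPoch (z * q) (q ^ 2) (n + 1)
      = ∑' n : ℕ, z ^ n * q ^ n / qPoch (q / z) (q ^ 2) (n + 1) :=
  omega_conjugate_symmetry_general q z hq hzq hqz
end
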